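/- Suppose N ≥ 4, A_F > 0, φ''_{2F} ≤ 0. Then G(α) = I − α(A_F L¹)^{−1}L^{qcf} is a contraction in the U^{2,∞} norm if and only if 0 < α < 2A_F/φ''_F. The norm ‖G(α)‖_{U^{2,∞}} is minimized at α* = A_F/(A_F + 2|φ''_{2F}|) = 2A_F/(φ''_F + A_F), with minimal value (1 − A_F/φ''_F)/(1 + A_F/φ''_F) < 1. -/

import Mathlib

/-!
Write `A = φ''_F + 4 φ''_{2F}` and `b = 2 |φ''_{2F}| / A`. Eliminating `z` from
`A · L¹ z = α · L^{qcf} u`, the second difference of `u - z` at a node `ℓ` is `(1 - α) u''_ℓ` in the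
continuum region and `(1 - α (1 + b)) u''_ℓ + (α b / 2) (u''_{ℓ-1} + u''_{ℓ+1})` in the atomistic
region, so `‖G(α)‖ ≤ |1 - α (1 + b)| + |α| b`. Equality is attained by a displacement whose `u''`
is a suitable sign pattern supported on `{-1, 0, 1}`. The remaining claims are elementary facts
about this piecewise linear function of `α`: it is below `1` exactly for `0 < α < 2 / (1 + 2 b)`,
and it is minimal at `α = 1 / (1 + b)`.
-/

/-- Discrete Dirichlet Laplacian. -/
noncomputable def L1 (ε : ℝ) (v : ℤ → ℝ) (j : ℤ) : ℝ :=
  (-v (j + 1) + 2 * v j - v (j - 1)) / ε ^ 2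

/-- Linearized atomistic operator. -/
noncomputable def La (ε φF φ2F : ℝ) (v : ℤ → ℝ) (j : ℤ) : ℝ :=
  φF * ((-v (j + 1) + 2 * v j - v (j - 1)) / ε ^ 2)
    + φ2F * ((-v (j + 2) + 2 * v j - v (j - 2)) / ε ^ 2)

/-- Linearized force-based QC operator. -/
noncomputable def Lqcf (K : ℕ) (ε φF φ2F : ℝ) (v : ℤ → ℝ) (j : ℤ) : ℝ :=
  if |j| ≤ (K : ℤ) then La ε φF φ2F v j else (φF + 4 * φ2F) * L1 ε v j

/-- The U^{2,∞} norm: max of |u''_ℓ| over ℓ = -N+1,…,N-1. -/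
noncomputable def U2inf (N : ℕ) (ε : ℝ) (u : ℤ → ℝ) : ℝ :=
  ⨆ ℓ : Finset.Icc (-(N : ℤ) + 1) ((N : ℤ) - 1),
    |(u ((ℓ : ℤ) + 1) - 2 * u (ℓ : ℤ) + u ((ℓ : ℤ) - 1)) / ε ^ 2|

/-- The U^{2,∞} operator norm of G(α) = I − α(A_F L¹)⁻¹ L^{qcf}. -/
noncomputable def gnormU2inf (N K : ℕ) (ε φF φ2F α : ℝ) : ℝ :=
  sSup {r : ℝ | ∃ u z : ℤ → ℝ,
    (∀ j : ℤ, (N : ℤ) ≤ |j| → u j = 0) ∧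
    (∀ j : ℤ, (N : ℤ) ≤ |j| → z j = 0) ∧
    (∀ j ∈ Finset.Icc (-(N : ℤ) + 1) ((N : ℤ) - 1),
      (φF + 4 * φ2F) * L1 ε z j = α * Lqcf K ε φF φ2F u j) ∧
    U2inf N ε u = 1 ∧ r = U2inf N ε (u - z)}

noncomputable abbrev interiorNodes (N : ℕ) : Finset ℤ := Finset.Icc (-(N : ℤ) + 1) ((N : ℤ) - 1)

lemma mem_interiorNodes {N : ℕ} {j : ℤ} :
    j ∈ interiorNodes N ↔ -(N : ℤ) + 1 ≤ j ∧ j ≤ (N : ℤ) - 1 :=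
  Finset.mem_Icc

noncomputable def secondDiff (ε : ℝ) (v : ℤ → ℝ) (j : ℤ) : ℝ :=
  (v (j + 1) - 2 * v j + v (j - 1)) / ε ^ 2

lemma secondDiff_sub (ε : ℝ) (u z : ℤ → ℝ) (j : ℤ) :
    secondDiff ε (u - z) j = secondDiff ε u j - secondDiff ε z j := by
  simp only [secondDiff, Pi.sub_apply]; ring

lemma L1_eq_neg_secondDiff (ε : ℝ) (v : ℤ → ℝ) (j : ℤ) : L1 ε v j = -secondDiff ε v j := by
  simp only [L1, secondDiff]; ring

lemma La_eq_secondDiff (ε φF φ2F : ℝ) (v : ℤ → ℝ) (j : ℤ) :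
    La ε φF φ2F v j = -((φF + 2 * φ2F) * secondDiff ε v j
      + φ2F * (secondDiff ε v (j - 1) + secondDiff ε v (j + 1))) := by
  simp only [La, secondDiff, sub_add_cancel, add_sub_cancel_right,
    show j - 1 - 1 = j - 2 by ring, show j + 1 + 1 = j + 2 by ring]
  ring

/-- Green's function of `v ↦ v (j+1) - 2 v j + v (j-1)` on `[-N, N]` with zero boundary values. -/
noncomputable def dirichletGreen (N : ℕ) (j k : ℤ) : ℝ :=
  -(((N : ℤ) - max j k) * ((N : ℤ) + min j k) : ℤ) / (2 * N)

lemma dirichletGreen_secondDiff {N : ℕ} (hN : 0 < N) (j k : ℤ) :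
    dirichletGreen N (j + 1) k - 2 * dirichletGreen N j k + dirichletGreen N (j - 1) k
      = if k = j then 1 else 0 := by
  have hN0 : (2 * N : ℝ) ≠ 0 := by positivity
  unfold dirichletGreen
  rcases lt_trichotomy k j with h | rfl | h
  · rw [if_neg h.ne, max_eq_left (by omega), max_eq_left h.le, max_eq_left (by omega),
      min_eq_right (by omega), min_eq_right h.le, min_eq_right (by omega)]
    push_cast; field_simp; ring
  · rw [if_pos rfl, max_eq_left (by omega), max_self, max_eq_right (by omega),
      min_eq_right (by omega), min_self, min_eq_left (by omega)]
    push_cast; field_simp; ring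
  · rw [if_neg h.ne', max_eq_right (by omega), max_eq_right h.le, max_eq_right (by omega),
      min_eq_left (by omega), min_eq_left h.le, min_eq_left (by omega)]
    push_cast; field_simp; ring

lemma dirichletGreen_eq_zero_of_abs_eq {N : ℕ} {j k : ℤ} (hj : |j| = N) (hk : k ∈ interiorNodes N) :
    dirichletGreen N j k = 0 := by
  rw [mem_interiorNodes] at hk
  rcases (abs_eq (Int.natCast_nonneg N)).mp hj with rfl | rfl
  · simp [dirichletGreen, max_eq_left (by omega : k ≤ (N : ℤ))]
  · simp [dirichletGreen, min_eq_left (by omega : -(N : ℤ) ≤ k)]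

theorem exists_dirichlet_solution {N : ℕ} (hN : 0 < N) (c : ℤ → ℝ) :
    ∃ z : ℤ → ℝ, (∀ j : ℤ, (N : ℤ) ≤ |j| → z j = 0) ∧
      ∀ j ∈ interiorNodes N, z (j + 1) - 2 * z j + z (j - 1) = c j := by
  classical
  set z : ℤ → ℝ := fun j =>
    if (N : ℤ) ≤ |j| then 0 else ∑ k ∈ interiorNodes N, dirichletGreen N j k * c k
  have hz : ∀ i : ℤ, |i| ≤ N → z i = ∑ k ∈ interiorNodes N, dirichletGreen N i k * c k := by
    intro i hi
    by_cases hiN : (N : ℤ) ≤ |i|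
    · simp only [z, if_pos hiN]
      exact (Finset.sum_eq_zero fun k hk => by
        rw [dirichletGreen_eq_zero_of_abs_eq (by omega) hk, zero_mul]).symm
    · simp only [z, if_neg hiN]
  refine ⟨z, fun j hj => if_pos hj, fun j hj => ?_⟩
  have hj' := mem_interiorNodes.mp hj
  rw [hz (j + 1) (abs_le.mpr ⟨by omega, by omega⟩), hz j (abs_le.mpr ⟨by omega, by omega⟩),
    hz (j - 1) (abs_le.mpr ⟨by omega, by omega⟩), Finset.mul_sum, ← Finset.sum_sub_distrib,
    ← Finset.sum_add_distrib]
  simp_rw [← mul_assoc, ← sub_mul, ← add_mul, dirichletGreen_secondDiff hN, ite_mul, one_mul,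
    zero_mul]
  rw [Finset.sum_ite_eq' _ j c, if_pos hj]

lemma U2inf_le {N : ℕ} {ε M : ℝ} {u : ℤ → ℝ}
    (h : ∀ j ∈ interiorNodes N, |secondDiff ε u j| ≤ M) (hM : 0 ≤ M) : U2inf N ε u ≤ M :=
  Real.iSup_le (fun ℓ => h ℓ ℓ.2) hM

lemma abs_secondDiff_le_U2inf {N : ℕ} {ε : ℝ} {u : ℤ → ℝ} {j : ℤ} (hj : j ∈ interiorNodes N) :
    |secondDiff ε u j| ≤ U2inf N ε u :=
  le_ciSup (f := fun ℓ : interiorNodes N => |secondDiff ε u ℓ|) (Set.finite_range _).bddAbove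
    ⟨j, hj⟩

lemma U2inf_eq_of_le {N : ℕ} {ε M : ℝ} {u : ℤ → ℝ}
    (h : ∀ j ∈ interiorNodes N, |secondDiff ε u j| ≤ M) {j : ℤ} (hj : j ∈ interiorNodes N)
    (hM : |secondDiff ε u j| = M) : U2inf N ε u = M :=
  le_antisymm (U2inf_le h (hM ▸ abs_nonneg _)) (hM ▸ abs_secondDiff_le_U2inf hj)

noncomputable def secondNeighbourRatio (φF φ2F : ℝ) : ℝ := -2 * φ2F / (φF + 4 * φ2F)

lemma secondNeighbourRatio_nonneg {φF φ2F : ℝ} (hAF : 0 < φF + 4 * φ2F) (hφ : φ2F ≤ 0) :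
    0 ≤ secondNeighbourRatio φF φ2F :=
  div_nonneg (by linarith) hAF.le

lemma one_add_secondNeighbourRatio {φF φ2F : ℝ} (hA : φF + 4 * φ2F ≠ 0) :
    1 + secondNeighbourRatio φF φ2F = (φF + 2 * φ2F) / (φF + 4 * φ2F) := by
  rw [secondNeighbourRatio, one_add_div hA]; ring_nf

lemma one_add_two_mul_secondNeighbourRatio {φF φ2F : ℝ} (hA : φF + 4 * φ2F ≠ 0) :
    1 + 2 * secondNeighbourRatio φF φ2F = φF / (φF + 4 * φ2F) := by
  rw [secondNeighbourRatio, mul_div_assoc', one_add_div hA]; ring_nf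

noncomputable def contractionFactor (b α : ℝ) : ℝ := |1 - α * (1 + b)| + |α| * b

lemma contractionFactor_nonneg {b : ℝ} (hb : 0 ≤ b) (α : ℝ) : 0 ≤ contractionFactor b α := by
  unfold contractionFactor; positivity

lemma abs_one_sub_le_contractionFactor {b : ℝ} (hb : 0 ≤ b) (α : ℝ) :
    |1 - α| ≤ contractionFactor b α :=
  calc |1 - α| = |(1 - α * (1 + b)) + α * b| := by ring_nf
    _ ≤ |1 - α * (1 + b)| + |α * b| := abs_add_le _ _
    _ = contractionFactor b α := by rw [abs_mul, abs_of_nonneg hb, contractionFactor]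

lemma abs_mul_add_mul_add_le {p q x y w : ℝ} (hx : |x| ≤ 1) (hy : |y| ≤ 1) (hw : |w| ≤ 1) :
    |p * x + q * (y + w)| ≤ |p| + 2 * |q| :=
  calc |p * x + q * (y + w)| ≤ |p| * |x| + |q| * (|y| + |w|) := by
        grw [abs_add_le, abs_mul, abs_mul, abs_add_le]
    _ ≤ |p| * 1 + |q| * (1 + 1) := by gcongr
    _ = |p| + 2 * |q| := by ring

section Pointwise

variable {K : ℕ} {ε φF φ2F α : ℝ} {u z : ℤ → ℝ} {j : ℤ}

lemma secondDiff_sub_eq_of_preconditioned (hA : φF + 4 * φ2F ≠ 0)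
    (h : (φF + 4 * φ2F) * L1 ε z j = α * Lqcf K ε φF φ2F u j) :
    secondDiff ε (u - z) j = secondDiff ε u j + α / (φF + 4 * φ2F) * Lqcf K ε φF φ2F u j := by
  rw [secondDiff_sub, sub_eq_add_neg, ← L1_eq_neg_secondDiff, div_mul_eq_mul_div, ← h,
    mul_div_cancel_left₀ _ hA]

lemma secondDiff_sub_of_abs_le (hA : φF + 4 * φ2F ≠ 0)
    (h : (φF + 4 * φ2F) * L1 ε z j = α * Lqcf K ε φF φ2F u j) (hj : |j| ≤ K) :
    secondDiff ε (u - z) j = (1 - α * (1 + secondNeighbourRatio φF φ2F)) * secondDiff ε u j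
      + α * secondNeighbourRatio φF φ2F / 2
        * (secondDiff ε u (j - 1) + secondDiff ε u (j + 1)) := by
  rw [secondDiff_sub_eq_of_preconditioned hA h, Lqcf, if_pos hj, La_eq_secondDiff,
    secondNeighbourRatio]
  field_simp
  ring

lemma secondDiff_sub_of_not_abs_le (hA : φF + 4 * φ2F ≠ 0)
    (h : (φF + 4 * φ2F) * L1 ε z j = α * Lqcf K ε φF φ2F u j) (hj : ¬|j| ≤ K) :
    secondDiff ε (u - z) j = (1 - α) * secondDiff ε u j := by
  rw [secondDiff_sub_eq_of_preconditioned hA h, Lqcf, if_neg hj, L1_eq_neg_secondDiff]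
  field_simp
  ring

end Pointwise

section Norm

variable {N K : ℕ} {ε φF φ2F α : ℝ}

lemma abs_secondDiff_sub_le_contractionFactor (hK : K + 2 ≤ N) (hAF : 0 < φF + 4 * φ2F)
    (hφ : φ2F ≤ 0) {u z : ℤ → ℝ}
    (heq : ∀ j ∈ interiorNodes N, (φF + 4 * φ2F) * L1 ε z j = α * Lqcf K ε φF φ2F u j)
    (hu : ∀ j ∈ interiorNodes N, |secondDiff ε u j| ≤ 1) {j : ℤ} (hj : j ∈ interiorNodes N) :
    |secondDiff ε (u - z) j| ≤ contractionFactor (secondNeighbourRatio φF φ2F) α := by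
  have hb := secondNeighbourRatio_nonneg hAF hφ
  by_cases hjK : |j| ≤ K
  · have hj' := abs_le.mp hjK
    rw [secondDiff_sub_of_abs_le hAF.ne' (heq j hj) hjK]
    refine (abs_mul_add_mul_add_le (hu j hj) (hu _ ?_) (hu _ ?_)).trans_eq ?_
    · exact mem_interiorNodes.mpr ⟨by omega, by omega⟩
    · exact mem_interiorNodes.mpr ⟨by omega, by omega⟩
    · rw [contractionFactor, abs_div, abs_mul, abs_of_nonneg hb, abs_two]; ring
  · rw [secondDiff_sub_of_not_abs_le hAF.ne' (heq j hj) hjK, abs_mul]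
    exact (mul_le_of_le_one_right (abs_nonneg _) (hu j hj)).trans
      (abs_one_sub_le_contractionFactor hb α)

lemma exists_secondDiff_eq (hN : 0 < N) (hε : ε ≠ 0) (c : ℤ → ℝ) :
    ∃ z : ℤ → ℝ, (∀ j : ℤ, (N : ℤ) ≤ |j| → z j = 0) ∧
      ∀ j ∈ interiorNodes N, secondDiff ε z j = c j := by
  obtain ⟨z, hz, hzc⟩ := exists_dirichlet_solution hN (fun j => ε ^ 2 * c j)
  exact ⟨z, hz, fun j hj => by rw [secondDiff, hzc j hj, mul_div_cancel_left₀ _ (pow_ne_zero 2 hε)]⟩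

lemma exists_abs_eq_one_mul_eq_abs (x : ℝ) : ∃ s : ℝ, |s| = 1 ∧ x * s = |x| := by
  rcases le_or_gt 0 x with hx | hx
  · exact ⟨1, abs_one, by rw [mul_one, abs_of_nonneg hx]⟩
  · exact ⟨-1, by norm_num, by rw [abs_of_neg hx]; ring⟩

/-- The extremal `u` has `u''` equal to `s` at `0`, `t` at `±1` and `0` elsewhere, with signs
`s, t` chosen so that the three terms of `(u - z)''₀` all equal their absolute values. -/
lemma exists_U2inf_eq_contractionFactor (hK : K + 2 ≤ N) (hε : ε ≠ 0)
    (hAF : 0 < φF + 4 * φ2F) (hφ : φ2F ≤ 0) :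
    ∃ u z : ℤ → ℝ,
      (∀ j : ℤ, (N : ℤ) ≤ |j| → u j = 0) ∧
      (∀ j : ℤ, (N : ℤ) ≤ |j| → z j = 0) ∧
      (∀ j ∈ interiorNodes N, (φF + 4 * φ2F) * L1 ε z j = α * Lqcf K ε φF φ2F u j) ∧
      U2inf N ε u = 1 ∧
      U2inf N ε (u - z) = contractionFactor (secondNeighbourRatio φF φ2F) α := by
  set b := secondNeighbourRatio φF φ2F
  have hb : 0 ≤ b := secondNeighbourRatio_nonneg hAF hφ
  have hN : 0 < N := by omega
  have h0 : (0 : ℤ) ∈ interiorNodes N := mem_interiorNodes.mpr ⟨by omega, by omega⟩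
  obtain ⟨s, hs, hps⟩ := exists_abs_eq_one_mul_eq_abs (1 - α * (1 + b))
  obtain ⟨t, ht, hαt⟩ := exists_abs_eq_one_mul_eq_abs α
  obtain ⟨u, hu, hus⟩ := exists_secondDiff_eq hN hε
    (fun j => if j = 0 then s else if j = 1 ∨ j = -1 then t else 0)
  obtain ⟨z, hz, hzu⟩ := exists_secondDiff_eq hN hε
    (fun j => -(α / (φF + 4 * φ2F) * Lqcf K ε φF φ2F u j))
  have heq : ∀ j ∈ interiorNodes N,
      (φF + 4 * φ2F) * L1 ε z j = α * Lqcf K ε φF φ2F u j := by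
    intro j hj
    rw [L1_eq_neg_secondDiff, hzu j hj]
    field_simp
  have hu1 : ∀ j ∈ interiorNodes N, |secondDiff ε u j| ≤ 1 := by
    intro j hj
    rw [hus j hj]
    split_ifs <;> simp [hs, ht]
  have hval : secondDiff ε (u - z) 0 = contractionFactor b α := by
    rw [secondDiff_sub_of_abs_le hAF.ne' (heq 0 h0) (by simp), hus 0 h0,
      hus _ (mem_interiorNodes.mpr ⟨by omega, by omega⟩),
      hus _ (mem_interiorNodes.mpr ⟨by omega, by omega⟩), contractionFactor, ← hps, ← hαt]
    norm_num
    ring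
  refine ⟨u, z, hu, hz, heq, U2inf_eq_of_le hu1 h0 (by simp [hus 0 h0, hs]), ?_⟩
  exact U2inf_eq_of_le (fun j hj => abs_secondDiff_sub_le_contractionFactor hK hAF hφ heq hu1 hj)
    h0 (by rw [hval, abs_of_nonneg (contractionFactor_nonneg hb α)])

theorem gnormU2inf_eq_contractionFactor (hK : K + 2 ≤ N) (hε : ε ≠ 0)
    (hAF : 0 < φF + 4 * φ2F) (hφ : φ2F ≤ 0) :
    gnormU2inf N K ε φF φ2F α = contractionFactor (secondNeighbourRatio φF φ2F) α := by
  refine IsGreatest.csSup_eq ⟨?_, ?_⟩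
  · obtain ⟨u, z, hu, hz, heq, hu1, huz⟩ := exists_U2inf_eq_contractionFactor hK hε hAF hφ
    exact ⟨u, z, hu, hz, heq, hu1, huz.symm⟩
  · rintro _ ⟨u, z, -, -, heq, hu1, rfl⟩
    refine U2inf_le (fun j hj => abs_secondDiff_sub_le_contractionFactor hK hAF hφ heq ?_ hj)
      (contractionFactor_nonneg (secondNeighbourRatio_nonneg hAF hφ) α)
    exact fun i hi => hu1 ▸ abs_secondDiff_le_U2inf hi

end Norm

section ContractionFactor

variable {b : ℝ}

lemma contractionFactor_lt_one_iff (hb : 0 ≤ b) (α : ℝ) :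
    contractionFactor b α < 1 ↔ 0 < α ∧ α * (1 + 2 * b) < 2 := by
  unfold contractionFactor
  rcases le_or_gt α 0 with hα | hα
  · have : 1 ≤ |1 - α * (1 + b)| := le_abs.mpr (Or.inl (by nlinarith))
    constructor
    · intro h; nlinarith [abs_nonneg α]
    · rintro ⟨h, -⟩; linarith
  · rw [abs_of_pos hα]
    rcases le_or_gt (α * (1 + b)) 1 with hc | hc
    · rw [abs_of_nonneg (by linarith)]
      constructor
      · intro h; constructor <;> nlinarith
      · rintro ⟨-, -⟩; nlinarith
    · rw [abs_of_neg (by linarith)]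
      constructor
      · intro h; constructor <;> nlinarith
      · rintro ⟨-, h⟩; nlinarith

/-- Key input: `|1 - α (1 + b)| + |α| (1 + b) ≥ 1`, by the triangle inequality. -/
lemma div_one_add_le_contractionFactor (hb : 0 ≤ b) (α : ℝ) :
    b / (1 + b) ≤ contractionFactor b α := by
  have hsum : 1 ≤ |1 - α * (1 + b)| + |α| * (1 + b) := by
    have := abs_add_le (1 - α * (1 + b)) (α * (1 + b))
    rwa [sub_add_cancel, abs_one, abs_mul, abs_of_nonneg (by linarith : (0 : ℝ) ≤ 1 + b)] at this
  rw [contractionFactor, div_le_iff₀ (by linarith)]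
  nlinarith [abs_nonneg (1 - α * (1 + b)), abs_nonneg α]

lemma contractionFactor_inv_one_add (hb : 0 ≤ b) :
    contractionFactor b (1 + b)⁻¹ = b / (1 + b) := by
  have : (1 + b)⁻¹ * (1 + b) = 1 := inv_mul_cancel₀ (by linarith)
  rw [contractionFactor, this, sub_self, abs_zero, zero_add, abs_of_pos (by positivity),
    inv_mul_eq_div]

end ContractionFactor

theorem qcl_preconditioner_contraction_U2inf_general
    (N K : ℕ) (hK : K + 2 ≤ N) (ε φF φ2F : ℝ)
    (hε : ε = 1 / N) (hAF : 0 < φF + 4 * φ2F) (hφ : φ2F ≤ 0) :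
    (∀ α : ℝ, gnormU2inf N K ε φF φ2F α < 1 ↔
      (0 < α ∧ α < 2 * (φF + 4 * φ2F) / φF)) ∧
    ((φF + 4 * φ2F) / ((φF + 4 * φ2F) + 2 * |φ2F|)
        = 2 * (φF + 4 * φ2F) / (φF + (φF + 4 * φ2F))) ∧
    (∀ α : ℝ,
      gnormU2inf N K ε φF φ2F ((φF + 4 * φ2F) / ((φF + 4 * φ2F) + 2 * |φ2F|))
        ≤ gnormU2inf N K ε φF φ2F α) ∧
    gnormU2inf N K ε φF φ2F ((φF + 4 * φ2F) / ((φF + 4 * φ2F) + 2 * |φ2F|))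
      = (1 - (φF + 4 * φ2F) / φF) / (1 + (φF + 4 * φ2F) / φF) ∧
    (1 - (φF + 4 * φ2F) / φF) / (1 + (φF + 4 * φ2F) / φF) < 1 := by
  have hε0 : ε ≠ 0 := by rw [hε]; exact one_div_ne_zero (Nat.cast_ne_zero.mpr (by omega))
  have hG := fun α => gnormU2inf_eq_contractionFactor (α := α) hK hε0 hAF hφ
  set b := secondNeighbourRatio φF φ2F
  have hb : 0 ≤ b := secondNeighbourRatio_nonneg hAF hφ
  have h1b : 1 + b = (φF + 2 * φ2F) / (φF + 4 * φ2F) := one_add_secondNeighbourRatio hAF.ne'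
  have h2b : 1 + 2 * b = φF / (φF + 4 * φ2F) := one_add_two_mul_secondNeighbourRatio hAF.ne'
  have hthreshold : 2 * (φF + 4 * φ2F) / φF = 2 / (1 + 2 * b) := by
    rw [h2b, div_div_eq_mul_div]
  have hoptimal : (φF + 4 * φ2F) / ((φF + 4 * φ2F) + 2 * |φ2F|) = (1 + b)⁻¹ := by
    rw [abs_of_nonpos hφ, h1b, inv_div]; ring_nf
  have hvalue : (1 - (φF + 4 * φ2F) / φF) / (1 + (φF + 4 * φ2F) / φF) = b / (1 + b) := by
    have : 0 < 1 + 2 * b := by positivity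
    rw [← inv_div φF, ← h2b]
    field_simp
    ring
  refine ⟨fun α => ?_, ?_, fun α => ?_, ?_, ?_⟩
  · rw [hG, contractionFactor_lt_one_iff hb, hthreshold, lt_div_iff₀ (by positivity)]
  · rw [hoptimal, h1b, inv_div, div_eq_div_iff (by linarith) (by linarith)]; ring
  · rw [hG, hG, hoptimal, contractionFactor_inv_one_add hb]
    exact div_one_add_le_contractionFactor hb α
  · rw [hG, hoptimal, contractionFactor_inv_one_add hb, hvalue]
  · rw [hvalue, div_lt_one (by positivity)]; linarith

/-- G(α) is a contraction in U^{2,∞} iff 0 < α < 2A_F/φF'';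
the norm is minimized at α* = A_F/(A_F+2|φ2F|) = 2A_F/(φF''+A_F) with minimal
value (1 − A_F/φF'')/(1 + A_F/φF'') < 1. -/
theorem qcl_preconditioner_contraction_U2inf
    (N K : ℕ) (hN : 4 ≤ N) (hK : K + 2 ≤ N) (ε φF φ2F : ℝ)
    (hε : ε = 1 / N) (hAF : 0 < φF + 4 * φ2F) (hφ : φ2F ≤ 0) :
    (∀ α : ℝ, gnormU2inf N K ε φF φ2F α < 1 ↔
      (0 < α ∧ α < 2 * (φF + 4 * φ2F) / φF)) ∧
    ((φF + 4 * φ2F) / ((φF + 4 * φ2F) + 2 * |φ2F|)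
        = 2 * (φF + 4 * φ2F) / (φF + (φF + 4 * φ2F))) ∧
    (∀ α : ℝ,
      gnormU2inf N K ε φF φ2F ((φF + 4 * φ2F) / ((φF + 4 * φ2F) + 2 * |φ2F|))
        ≤ gnormU2inf N K ε φF φ2F α) ∧
    gnormU2inf N K ε φF φ2F ((φF + 4 * φ2F) / ((φF + 4 * φ2F) + 2 * |φ2F|))
      = (1 - (φF + 4 * φ2F) / φF) / (1 + (φF + 4 * φ2F) / φF) ∧
    (1 - (φF + 4 * φ2F) / φF) / (1 + (φF + 4 * φ2F) / φF) < 1 :=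
  qcl_preconditioner_contraction_U2inf_general N K hK ε φF φ2F hε hAF hφ
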